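/- Let X = P^n be the n-dimensional projective space over k and let x ∈ P^n be a closed point. Then the line bundle O(m) separates p^e-Frobenius jets at x if and only if m ≥ n(p^e − 1); consequently, the Frobenius-Seshadri constant of O(1) at x equals 1/n. -/

import Mathlib

open MvPolynomial

/-- The line bundle `O(m)` on `ℙⁿ_k` separates `pᵉ`-Frobenius jets at the closed point
`x` with homogeneous coordinates `a : Fin (n+1) → k` (normalized in the chart `X_i ≠ 0`,
so `a i ≠ 0`):  in the local coordinates `y_j = X_j/X_i - a_j/a_i` (for `j ≠ i`) at `x`,
a global section of `O(m)` is `f/X_iᵐ` with `f` homogeneous of degree `m`, and its germ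
at `x` is obtained from `f` by substituting `X_i ↦ 1` and `X_j ↦ a_j/a_i + y_j`.
The condition below says exactly that the restriction map
`H⁰(ℙⁿ, O(m)) → H⁰(ℙⁿ, O(m) ⊗ O/m_x^{[pᵉ]}) = k[y]/(y₁^{pᵉ}, …, y_n^{pᵉ})`
is surjective. -/
def ProjSpaceSepFrobJets (p : ℕ) (k : Type*) [Field k] {n : ℕ}
    (a : Fin (n + 1) → k) (i : Fin (n + 1)) (m e : ℕ) : Prop :=
  ∀ g : MvPolynomial {j : Fin (n + 1) // j ≠ i} k,
    ∃ f : MvPolynomial (Fin (n + 1)) k, f.IsHomogeneous m ∧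
      Ideal.Quotient.mk
          (Ideal.span (Set.range fun j : {j : Fin (n + 1) // j ≠ i} =>
            (X j : MvPolynomial {j : Fin (n + 1) // j ≠ i} k) ^ p ^ e))
          (aeval (fun j : Fin (n + 1) =>
            if h : j = i then 1
            else C (a j / a i) + X (⟨j, h⟩ : {j : Fin (n + 1) // j ≠ i})) f) =
        Ideal.Quotient.mk _ g

/-- `s_F(O(m); x)` : the largest `e ≥ 1` such that `O(m)` separates `pᵉ`-Frobenius jets
at `x` (and `0` if there is no such `e`). -/
noncomputable def projSpaceSF (p : ℕ) (k : Type*) [Field k] {n : ℕ}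
    (a : Fin (n + 1) → k) (i : Fin (n + 1)) (m : ℕ) : ℕ :=
  sSup {e | 1 ≤ e ∧ ProjSpaceSepFrobJets p k a i m e}

/-- The Frobenius-Seshadri constant `ε_F(O(1); x) = sup_{m ≥ 1} (p^{s_F(O(m); x)} - 1)/m`
of `O(1)` on `ℙⁿ_k` at the point `x` with homogeneous coordinates `a`. -/
noncomputable def projSpaceEpsF (p : ℕ) (k : Type*) [Field k] {n : ℕ}
    (a : Fin (n + 1) → k) (i : Fin (n + 1)) : ℝ :=
  ⨆ m : ℕ+, ((p : ℝ) ^ projSpaceSF p k a i (m : ℕ) - 1) / (m : ℝ)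

/-!
In the chart `X_i ≠ 0`, the germs at `x` of sections of `O(m)` are exactly the polynomials of
degree at most `m` in the local coordinates `y_j`: a polynomial is the germ of the sum of its
homogeneous components, each homogenized by a power of `X_i`. Modulo `𝔪^[q] = (y_j ^ q)_j`
every polynomial reduces to one with all exponents below `q`, of degree at most `n (q - 1)`,
while the reduced monomial `∏ y_j ^ (q - 1)` has degree exactly `n (q - 1)`. Hence `O(m)`
separates `pᵉ`-Frobenius jets iff `n (pᵉ - 1) ≤ m`, so `(p ^ s_F(O(m)) - 1) / m ≤ 1 / n`,
with equality at `m = n (p - 1)`.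
-/

namespace MvPolynomial

variable {σ τ R : Type*}

theorem totalDegree_aeval_le_of_totalDegree_le_one [CommSemiring R] {φ : σ → MvPolynomial τ R}
    (hφ : ∀ j, (φ j).totalDegree ≤ 1) (f : MvPolynomial σ R) :
    (aeval φ f).totalDegree ≤ f.totalDegree := by
  classical
  conv_lhs => rw [f.as_sum, map_sum]
  refine totalDegree_finsetSum_le fun α hα => ?_
  rw [aeval_monomial, MvPolynomial.algebraMap_eq]
  calc (C (coeff α f) * α.prod fun j e => φ j ^ e).totalDegree
      ≤ (α.prod fun j e => φ j ^ e).totalDegree := by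
        simpa using totalDegree_mul (C (coeff α f)) (α.prod fun j e => φ j ^ e)
    _ ≤ α.sum fun _ e => e := by
        refine (totalDegree_finsetProd _ _).trans (Finset.sum_le_sum fun j _ => ?_)
        exact (totalDegree_pow _ _).trans (by simpa using Nat.mul_le_mul_left (α j) (hφ j))
    _ ≤ f.totalDegree := le_totalDegree hα

theorem sum_range_homogeneousComponent_of_totalDegree_le [CommSemiring R]
    {φ : MvPolynomial σ R} {m : ℕ} (hφ : φ.totalDegree ≤ m) :
    ∑ d ∈ Finset.range (m + 1), homogeneousComponent d φ = φ := by
  rw [← Finset.sum_subset (Finset.range_subset_range.mpr (Nat.succ_le_succ hφ))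
    fun d _ hd => homogeneousComponent_eq_zero d φ (by simp at hd; omega)]
  exact sum_homogeneousComponent φ

/-- The Frobenius power `𝔪^[q] = (X_j ^ q)_j` of the ideal `𝔪` generated by the variables. -/
noncomputable def frobeniusPowVars (σ R : Type*) [CommSemiring R] (q : ℕ) :
    Ideal (MvPolynomial σ R) :=
  Ideal.span (Set.range fun j => X j ^ q)

theorem mem_frobeniusPowVars_iff [CommSemiring R] {q : ℕ} {f : MvPolynomial σ R} :
    f ∈ frobeniusPowVars σ R q ↔ ∀ α ∈ f.support, ∃ j, q ≤ α j := by
  have hrange : (Set.range fun j => (X j : MvPolynomial σ R) ^ q) =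
      (fun s => monomial s (1 : R)) '' Set.range fun j => Finsupp.single j q := by
    rw [← Set.range_comp]
    simp only [Function.comp_def, X_pow_eq_monomial]
  simp [frobeniusPowVars, hrange, mem_ideal_span_monomial_image, Finsupp.single_le_iff]

theorem coeff_eq_zero_of_mem_frobeniusPowVars [CommSemiring R] {q : ℕ} {f : MvPolynomial σ R}
    (hf : f ∈ frobeniusPowVars σ R q) {α : σ →₀ ℕ} (hα : ∀ j, α j < q) :
    coeff α f = 0 := by
  by_contra h
  obtain ⟨j, hj⟩ := mem_frobeniusPowVars_iff.mp hf α (mem_support_iff.mpr h)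
  exact (hα j).not_ge hj

theorem monomial_mem_frobeniusPowVars [CommSemiring R] {q : ℕ} {α : σ →₀ ℕ} {j : σ}
    (hj : q ≤ α j) (c : R) : monomial α c ∈ frobeniusPowVars σ R q :=
  mem_frobeniusPowVars_iff.mpr fun _ hβ =>
    ⟨j, Finset.mem_singleton.mp (support_monomial_subset hβ) ▸ hj⟩

theorem exists_totalDegree_le_sub_mem_frobeniusPowVars [Fintype σ] [CommRing R] (q : ℕ)
    (g : MvPolynomial σ R) :
    ∃ h : MvPolynomial σ R, h.totalDegree ≤ Fintype.card σ * (q - 1) ∧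
      h - g ∈ frobeniusPowVars σ R q := by
  classical
  let reduced : (σ →₀ ℕ) → Prop := fun α => ∀ j, α j < q
  refine ⟨∑ α ∈ g.support with reduced α, monomial α (coeff α g), ?_, ?_⟩
  · refine totalDegree_finsetSum_le fun α hα => (totalDegree_monomial_le _ _).trans ?_
    have hαq : ∀ j, α j ≤ q - 1 :=
      fun j => Nat.le_sub_one_of_lt ((Finset.mem_filter.mp hα).2 j)
    calc (α.sum fun _ e => e) = ∑ j, α j := Finsupp.sum_fintype _ _ fun _ => rfl
      _ ≤ ∑ _j : σ, (q - 1) := Finset.sum_le_sum fun j _ => hαq j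
      _ = Fintype.card σ * (q - 1) := by simp
  · have hsplit := Finset.sum_filter_add_sum_filter_not g.support reduced
      fun α => monomial α (coeff α g)
    rw [support_sum_monomial_coeff] at hsplit
    have hdiff : ∑ α ∈ g.support with reduced α, monomial α (coeff α g) - g =
        -∑ α ∈ g.support with ¬reduced α, monomial α (coeff α g) := by
      linear_combination hsplit
    rw [hdiff]
    refine neg_mem (Ideal.sum_mem _ fun α hα => ?_)
    obtain ⟨j, hj⟩ := not_forall.mp (Finset.mem_filter.mp hα).2
    exact monomial_mem_frobeniusPowVars (not_lt.mp hj) _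

theorem degree_le_totalDegree_of_sub_monomial_mem_frobeniusPowVars [CommRing R] {q : ℕ}
    {α : σ →₀ ℕ} (hα : ∀ j, α j < q) {c : R} (hc : c ≠ 0) {h : MvPolynomial σ R}
    (hh : h - monomial α c ∈ frobeniusPowVars σ R q) :
    (α.sum fun _ e => e) ≤ h.totalDegree := by
  classical
  have hcoeff := coeff_eq_zero_of_mem_frobeniusPowVars hh hα
  rw [coeff_sub, coeff_monomial, if_pos rfl, sub_eq_zero] at hcoeff
  exact le_totalDegree (mem_support_iff.mpr (hcoeff ▸ hc))

end MvPolynomial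

section Chart

variable {k : Type*} [Field k] {n : ℕ} (a : Fin (n + 1) → k) (i : Fin (n + 1))

/-- The germ at `x = [a]` of a section `f / X_iᵐ` of `O(m)`, written in the local coordinates
`y_j = X_j / X_i - a_j / a_i` of the chart `X_i ≠ 0`. -/
noncomputable def dehomogenizeAt :
    MvPolynomial (Fin (n + 1)) k →ₐ[k] MvPolynomial {j : Fin (n + 1) // j ≠ i} k :=
  aeval fun j => if h : j = i then 1 else C (a j / a i) + X ⟨j, h⟩

noncomputable def homogenizeAt :
    MvPolynomial {j : Fin (n + 1) // j ≠ i} k →ₐ[k] MvPolynomial (Fin (n + 1)) k :=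
  aeval fun j => X (j : Fin (n + 1)) - C (a j / a i) * X i

theorem dehomogenizeAt_X_self : dehomogenizeAt a i (X i) = 1 := by
  simp [dehomogenizeAt]

theorem dehomogenizeAt_homogenizeAt (φ : MvPolynomial {j : Fin (n + 1) // j ≠ i} k) :
    dehomogenizeAt a i (homogenizeAt a i φ) = φ := by
  have hcomp : (dehomogenizeAt a i).comp (homogenizeAt a i) = AlgHom.id k _ := by
    ext j
    simp [dehomogenizeAt, homogenizeAt, j.2]
  exact AlgHom.congr_fun hcomp φ

theorem isHomogeneous_homogenizeAt {φ : MvPolynomial {j : Fin (n + 1) // j ≠ i} k} {d : ℕ}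
    (hφ : φ.IsHomogeneous d) : (homogenizeAt a i φ).IsHomogeneous d := by
  have hlin := hφ.aeval
    (fun j : {j : Fin (n + 1) // j ≠ i} => X (j : Fin (n + 1)) - C (a j / a i) * X i)
    fun j => (isHomogeneous_X k (j : Fin (n + 1))).sub (isHomogeneous_C_mul_X (a j / a i) i)
  rwa [one_mul] at hlin

theorem totalDegree_dehomogenizeAt_le (f : MvPolynomial (Fin (n + 1)) k) :
    (dehomogenizeAt a i f).totalDegree ≤ f.totalDegree := by
  refine totalDegree_aeval_le_of_totalDegree_le_one (fun j => ?_) f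
  split_ifs
  · simp
  · exact (totalDegree_add _ _).trans (by simp [totalDegree_X])

theorem exists_isHomogeneous_dehomogenizeAt_eq {m : ℕ}
    {h : MvPolynomial {j : Fin (n + 1) // j ≠ i} k} (hh : h.totalDegree ≤ m) :
    ∃ f : MvPolynomial (Fin (n + 1)) k, f.IsHomogeneous m ∧ dehomogenizeAt a i f = h := by
  refine ⟨∑ d ∈ Finset.range (m + 1),
    X i ^ (m - d) * homogenizeAt a i (homogeneousComponent d h), ?_, ?_⟩
  · refine IsHomogeneous.sum _ _ _ fun d hd => ?_
    have hdm : m - d + d = m := Nat.sub_add_cancel (Nat.lt_succ_iff.mp (Finset.mem_range.mp hd))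
    have hprod := (isHomogeneous_X_pow i (m - d)).mul
      (isHomogeneous_homogenizeAt a i (homogeneousComponent_isHomogeneous d h))
    rwa [hdm] at hprod
  · simp only [map_sum, map_mul, map_pow, dehomogenizeAt_X_self, one_pow, one_mul,
      dehomogenizeAt_homogenizeAt]
    exact sum_range_homogeneousComponent_of_totalDegree_le hh

end Chart

section FrobeniusJets

variable {p : ℕ} {k : Type*} [Field k] {n : ℕ} {a : Fin (n + 1) → k} {i : Fin (n + 1)}
  {m e : ℕ}

theorem projSpaceSepFrobJets_iff_forall_exists :
    ProjSpaceSepFrobJets p k a i m e ↔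
      ∀ g, ∃ f : MvPolynomial (Fin (n + 1)) k, f.IsHomogeneous m ∧
        dehomogenizeAt a i f - g ∈ frobeniusPowVars {j : Fin (n + 1) // j ≠ i} k (p ^ e) := by
  simp only [ProjSpaceSepFrobJets, Ideal.Quotient.eq]
  rfl

theorem card_subtype_ne (i : Fin (n + 1)) : Fintype.card {j : Fin (n + 1) // j ≠ i} = n := by
  simp [Fintype.card_subtype_compl]

theorem projSpaceSepFrobJets_of_le (hm : n * (p ^ e - 1) ≤ m) :
    ProjSpaceSepFrobJets p k a i m e := by
  refine projSpaceSepFrobJets_iff_forall_exists.mpr fun g => ?_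
  obtain ⟨h, hdeg, hhg⟩ := exists_totalDegree_le_sub_mem_frobeniusPowVars (p ^ e) g
  rw [card_subtype_ne] at hdeg
  obtain ⟨f, hf, rfl⟩ := exists_isHomogeneous_dehomogenizeAt_eq a i (hdeg.trans hm)
  exact ⟨f, hf, hhg⟩

theorem le_of_projSpaceSepFrobJets (hp : 0 < p) (H : ProjSpaceSepFrobJets p k a i m e) :
    n * (p ^ e - 1) ≤ m := by
  let β : {j : Fin (n + 1) // j ≠ i} →₀ ℕ :=
    Finsupp.equivFunOnFinite.symm fun _ => p ^ e - 1
  obtain ⟨f, hf, hfβ⟩ := projSpaceSepFrobJets_iff_forall_exists.mp H (monomial β 1)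
  have hβ : (β.sum fun _ d => d) = n * (p ^ e - 1) := by
    simp [β, Finsupp.sum_fintype]
  calc n * (p ^ e - 1) = β.sum fun _ d => d := hβ.symm
    _ ≤ (dehomogenizeAt a i f).totalDegree :=
      degree_le_totalDegree_of_sub_monomial_mem_frobeniusPowVars
        (fun _ => Nat.sub_lt (pow_pos hp e) one_pos) one_ne_zero hfβ
    _ ≤ f.totalDegree := totalDegree_dehomogenizeAt_le a i f
    _ ≤ m := hf.totalDegree_le

theorem projSpaceSepFrobJets_iff (hp : 0 < p) :
    ProjSpaceSepFrobJets p k a i m e ↔ n * (p ^ e - 1) ≤ m :=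
  ⟨le_of_projSpaceSepFrobJets hp, projSpaceSepFrobJets_of_le⟩

theorem bddAbove_setOf_mul_pow_sub_one_le (hp : 1 < p) (hn : 0 < n) (m : ℕ) :
    BddAbove {e | n * (p ^ e - 1) ≤ m} :=
  ⟨m, fun e he => calc
    e ≤ p ^ e - 1 := Nat.le_sub_one_of_lt (Nat.lt_pow_self hp)
    _ ≤ n * (p ^ e - 1) := Nat.le_mul_of_pos_left _ hn
    _ ≤ m := he⟩

theorem projSpaceSF_eq (hp : 0 < p) (m : ℕ) :
    projSpaceSF p k a i m = sSup {e | 1 ≤ e ∧ n * (p ^ e - 1) ≤ m} := by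
  simp only [projSpaceSF, projSpaceSepFrobJets_iff hp]

theorem mul_pow_projSpaceSF_sub_one_le (hp : 1 < p) (hn : 0 < n) (m : ℕ) :
    n * (p ^ projSpaceSF p k a i m - 1) ≤ m := by
  rw [projSpaceSF_eq (zero_lt_one.trans hp)]
  rcases Set.eq_empty_or_nonempty {e | 1 ≤ e ∧ n * (p ^ e - 1) ≤ m} with hS | hS
  · simp [hS]
  · exact (Nat.sSup_mem hS ((bddAbove_setOf_mul_pow_sub_one_le hp hn m).mono
      fun _ he => he.2)).2

theorem one_le_projSpaceSF (hp : 1 < p) (hn : 0 < n) :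
    1 ≤ projSpaceSF p k a i (n * (p - 1)) := by
  rw [projSpaceSF_eq (zero_lt_one.trans hp)]
  exact le_csSup ((bddAbove_setOf_mul_pow_sub_one_le hp hn _).mono fun _ he => he.2)
    ⟨le_rfl, by rw [pow_one]⟩

end FrobeniusJets

theorem iSup_pow_sub_one_div_eq_one_div {p n : ℕ} (hp : 1 < p) (hn : 0 < n) {s : ℕ → ℕ}
    (hs : ∀ m, n * (p ^ s m - 1) ≤ m) (hs₁ : 1 ≤ s (n * (p - 1))) :
    ⨆ m : ℕ+, ((p : ℝ) ^ s (m : ℕ) - 1) / (m : ℝ) = 1 / (n : ℝ) := by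
  have hnR : (0 : ℝ) < n := by exact_mod_cast hn
  have hbound : ∀ m : ℕ+, ((p : ℝ) ^ s (m : ℕ) - 1) / (m : ℝ) ≤ 1 / (n : ℝ) := by
    intro m
    have hm : ((n * (p ^ s m - 1) : ℕ) : ℝ) ≤ (m : ℕ) := by exact_mod_cast hs m
    push_cast [Nat.one_le_pow _ _ (zero_lt_one.trans hp)] at hm
    rw [div_le_div_iff₀ (by positivity) hnR]
    linarith
  let m₀ : ℕ+ := ⟨n * (p - 1), Nat.mul_pos hn (Nat.sub_pos_of_lt hp)⟩
  refine le_antisymm (ciSup_le hbound)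
    (le_ciSup_of_le ⟨1 / (n : ℝ), Set.forall_mem_range.mpr hbound⟩ m₀ ?_)
  have hpR : (1 : ℝ) < p := by exact_mod_cast hp
  have hpow : (p : ℝ) ≤ (p : ℝ) ^ s (m₀ : ℕ) :=
    le_self_pow₀ hpR.le (Nat.one_le_iff_ne_zero.mp hs₁)
  have hm₀ : ((m₀ : ℕ) : ℝ) = n * ((p : ℝ) - 1) := by simp [m₀, Nat.cast_sub hp.le]
  rw [hm₀, div_le_div_iff₀ hnR (by nlinarith)]
  nlinarith

theorem projSpace_sepFrobJets_iff_and_epsF_general {p : ℕ} (hp : p.Prime)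
    (k : Type*) [Field k]
    (n : ℕ) (hn : 1 ≤ n) (a : Fin (n + 1) → k) (i : Fin (n + 1)) :
    (∀ m e : ℕ, 1 ≤ e →
      (ProjSpaceSepFrobJets p k a i m e ↔ n * (p ^ e - 1) ≤ m)) ∧
    projSpaceEpsF p k a i = 1 / (n : ℝ) :=
  ⟨fun _ _ _ => projSpaceSepFrobJets_iff hp.pos,
    iSup_pow_sub_one_div_eq_one_div hp.one_lt hn (mul_pow_projSpaceSF_sub_one_le hp.one_lt hn)
      (one_le_projSpaceSF hp.one_lt hn)⟩

/-- On `X = ℙⁿ` over an algebraically closed field `k` of characteristic `p > 0`, for any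
closed point `x ∈ ℙⁿ` (given by homogeneous coordinates `a` with `a i ≠ 0`): the line
bundle `O(m)` separates `pᵉ`-Frobenius jets at `x` if and only if `m ≥ n(pᵉ - 1)`;
consequently the Frobenius-Seshadri constant of `O(1)` at `x` equals `1/n`. -/
theorem projSpace_sepFrobJets_iff_and_epsF {p : ℕ} (hp : p.Prime)
    (k : Type*) [Field k] [IsAlgClosed k] [CharP k p]
    (n : ℕ) (hn : 1 ≤ n) (a : Fin (n + 1) → k) (i : Fin (n + 1)) (ha : a i ≠ 0) :
    (∀ m e : ℕ, 1 ≤ e →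
      (ProjSpaceSepFrobJets p k a i m e ↔ n * (p ^ e - 1) ≤ m)) ∧
    projSpaceEpsF p k a i = 1 / (n : ℝ) :=
  projSpace_sepFrobJets_iff_and_epsF_general hp k n hn a i
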